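/- arXiv:1406.1277 — 7 statements merged into one kernel-verified Lean document; each statement's English description precedes it below -/
import Mathlib

section
/- Let r ≥ 1, x₁,…,x_r > 0, and let M ∈ M_r(ℝ) have entries M_{ij} = x_i δ_{ij} − √(x_i x_j). Then for every vector w ∈ ℝ^r one has w^T M w ≥ −((r−1)/r) (∑_{i=1}^r x_i) (w^T w). In particular the smallest eigenvalue of M is at least −((r−1)/r) ∑_{i=1}^r x_i. -/
open Matrix Finset

theorem stmt2 (r : ℕ) (hr : 1 ≤ r) (x : Fin r → ℝ) (hx : ∀ i, 0 < x i)
    (M : Matrix (Fin r) (Fin r) ℝ)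
    (hM : ∀ i j, M i j = (if i = j then x i else 0) - Real.sqrt (x i * x j)) :
    (∀ w : Fin r → ℝ,
      -(((r : ℝ) - 1) / r) * (∑ i, x i) * (w ⬝ᵥ w) ≤ w ⬝ᵥ M.mulVec w) ∧
    (∀ (hHerm : M.IsHermitian) (i : Fin r),
      -(((r : ℝ) - 1) / r) * (∑ j, x j) ≤ hHerm.eigenvalues i) := by
  have hr0 : (0:ℝ) < r := by positivity
  have hr1 : (1:ℝ) ≤ r := by exact_mod_cast hr
  -- quadratic form formula
  have hQ : ∀ w : Fin r → ℝ, w ⬝ᵥ M.mulVec w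
      = (∑ i, x i * w i ^ 2) - (∑ i, Real.sqrt (x i) * w i) ^ 2 := by
    intro w
    have hrow : ∀ i, (M.mulVec w) i
        = x i * w i - Real.sqrt (x i) * ∑ j, Real.sqrt (x j) * w j := by
      intro i
      have : ∀ j, M i j * w j
          = (if i = j then x i * w j else 0) - Real.sqrt (x i) * (Real.sqrt (x j) * w j) := by
        intro j
        rw [hM, Real.sqrt_mul (hx i).le]
        by_cases h : i = j <;> simp [h] <;> ring
      simp only [Matrix.mulVec, dotProduct, this, Finset.sum_sub_distrib,
        Finset.sum_ite_eq, Finset.mem_univ, if_true, ← Finset.mul_sum]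
    simp only [dotProduct, hrow]
    rw [Finset.sum_congr rfl (fun i _ => by ring :
      ∀ i ∈ Finset.univ, w i * (x i * w i - Real.sqrt (x i) * ∑ j, Real.sqrt (x j) * w j)
        = x i * w i ^ 2 - (∑ j, Real.sqrt (x j) * w j) * (Real.sqrt (x i) * w i)),
      Finset.sum_sub_distrib, ← Finset.mul_sum]
    ring
  have main : ∀ w : Fin r → ℝ,
      -(((r : ℝ) - 1) / r) * (∑ i, x i) * (w ⬝ᵥ w) ≤ w ⬝ᵥ M.mulVec w := by
    intro w
    rw [hQ]
    have hww : w ⬝ᵥ w = ∑ i, w i ^ 2 := by simp [dotProduct, sq]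
    set a : Fin r → ℝ := fun i => Real.sqrt (x i) * w i with ha
    have ha2 : ∀ i, a i ^ 2 = x i * w i ^ 2 := by
      intro i; rw [ha]; rw [mul_pow, Real.sq_sqrt (hx i).le]
    have h1 : (∑ i, a i) ^ 2 ≤ (r : ℝ) * ∑ i, a i ^ 2 := by
      simpa using sq_sum_le_card_mul_sum_sq (s := Finset.univ) (f := a)
    have h2 : (∑ i, a i) ^ 2 ≤ (∑ i, x i) * (∑ i, w i ^ 2) := by
      have := Finset.sum_mul_sq_le_sq_mul_sq Finset.univ (fun i => Real.sqrt (x i)) w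
      simpa [Real.sq_sqrt (hx _).le] using this
    have hsum : ∑ i, x i * w i ^ 2 = ∑ i, a i ^ 2 := by
      exact Finset.sum_congr rfl fun i _ => (ha2 i).symm
    rw [hww, hsum]
    rw [show -(((r : ℝ) - 1) / r) * (∑ i, x i) * (∑ i, w i ^ 2)
        = (-((r : ℝ) - 1) * (∑ i, x i) * (∑ i, w i ^ 2)) / r by ring,
      div_le_iff₀ hr0]
    have h2' : ((r : ℝ) - 1) * ((∑ i, a i) ^ 2)
        ≤ ((r : ℝ) - 1) * ((∑ i, x i) * (∑ i, w i ^ 2)) :=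
      mul_le_mul_of_nonneg_left h2 (by linarith)
    nlinarith [h1, h2']
  refine ⟨main, fun hHerm i => ?_⟩
  have hnorm : ⇑(hHerm.eigenvectorBasis i) ⬝ᵥ ⇑(hHerm.eigenvectorBasis i) = 1 := by
    have h : ‖hHerm.eigenvectorBasis i‖ = 1 := hHerm.eigenvectorBasis.orthonormal.1 i
    rw [EuclideanSpace.norm_eq] at h
    have h2 : ∑ j, ‖(hHerm.eigenvectorBasis i) j‖ ^ 2 = 1 := Real.sqrt_eq_one.mp h
    calc ⇑(hHerm.eigenvectorBasis i) ⬝ᵥ ⇑(hHerm.eigenvectorBasis i)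
        = ∑ j, ‖(hHerm.eigenvectorBasis i) j‖ ^ 2 := by
          simp [dotProduct, Real.norm_eq_abs, sq_abs, sq]
      _ = 1 := h2
  have key := main ⇑(hHerm.eigenvectorBasis i)
  rw [hHerm.mulVec_eigenvectorBasis i, dotProduct_smul, smul_eq_mul, hnorm, mul_one,
    mul_one] at key
  exact key
end

section
/- Let x₁ > x₂ > ⋯ > x_q > 0 with positive integer multiplicities m₁,…,m_q, and define F(λ) = ∑_{i=1}^q m_i x_i/(x_i − λ) − 1. Then F has exactly q real roots η₁ > η₂ > ⋯ > η_q, and they interlace: x₁ > η₁ > x₂ > η₂ > ⋯ > η_{q−1} > x_q > 0 ≥ η_q, where moreover η_q < 0 whenever ∑_{i=1}^q m_i > 1. -/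
/-!
With `c j = m j * x j > 0`, each summand `c j / (x j - t)` increases in `t` away from its pole,
so `F` is strictly increasing on every interval free of poles. Between consecutive poles
`x (i+1) < x i` it runs from `-∞` to `+∞`, and on `(-∞, x_q)` from `-1` to `F 0 = ∑ m_i - 1 ≥ 0`;
the intermediate value theorem gives one root in each of these `q` gaps and monotonicity makes it
unique there. Beyond `x_1` every summand is negative, so there are no further roots, and comparing
`F η_q = 0` with `F 0` gives the sign of `η_q`.
-/

open Finset Filter Topology Set

section PoleSum

variable {ι : Type*} [Fintype ι]

noncomputable def poleSum (c p : ι → ℝ) (t : ℝ) : ℝ :=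
  ∑ j, c j / (p j - t)

variable {c p : ι → ℝ}

theorem div_sub_lt_div_sub {c p a b : ℝ} (hc : 0 < c) (hab : a < b) (hp : p ∉ Icc a b) :
    c / (p - a) < c / (p - b) := by
  have hprod : 0 < (p - a) * (p - b) := by
    rcases not_and_or.1 hp with h | h
    · exact mul_pos_of_neg_of_neg (by linarith) (by linarith)
    · exact mul_pos (by linarith) (by linarith)
  have key : c / (p - b) - c / (p - a) = c * (b - a) / ((p - a) * (p - b)) := by
    rw [div_sub_div _ _ (right_ne_zero_of_mul hprod.ne') (left_ne_zero_of_mul hprod.ne')]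
    ring
  linarith [div_pos (mul_pos hc (sub_pos.2 hab)) hprod]

theorem poleSum_strictMonoOn [Nonempty ι] (hc : ∀ j, 0 < c j) {s : Set ℝ} [s.OrdConnected]
    (hs : ∀ j, p j ∉ s) : StrictMonoOn (poleSum c p) s := fun _ ha _ hb hab =>
  sum_lt_sum_of_nonempty univ_nonempty fun j _ =>
    div_sub_lt_div_sub (hc j) hab fun hj => hs j (Set.Icc_subset s ha hb hj)

theorem poleSum_continuousOn {s : Set ℝ} (hs : ∀ j, p j ∉ s) :
    ContinuousOn (poleSum c p) s :=
  continuousOn_finsetSum _ fun j _ => continuousOn_const.div (continuousOn_const.sub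
    continuousOn_id) fun _ ht => sub_ne_zero.2 (ne_of_mem_of_not_mem ht (hs j)).symm

theorem tendsto_poleSum_atBot : Tendsto (poleSum c p) atBot (𝓝 0) := by
  have h : ∀ j, Tendsto (fun t => c j / (p j - t)) atBot (𝓝 0) := fun j =>
    (tendsto_atTop_add_const_left atBot (p j) tendsto_neg_atBot_atTop).const_div_atTop (c j)
  have := tendsto_finsetSum univ fun j _ => h j
  rw [sum_const_zero] at this
  exact this

theorem poleSum_eq_add_sum_erase [DecidableEq ι] (i : ι) (t : ℝ) :
    poleSum c p t = c i / (p i - t) + ∑ j ∈ univ.erase i, c j / (p j - t) :=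
  (add_sum_erase _ _ (mem_univ i)).symm

theorem continuousAt_sum_erase_div_sub [DecidableEq ι] (hp : Function.Injective p) (i : ι) :
    ContinuousAt (fun t => ∑ j ∈ univ.erase i, c j / (p j - t)) (p i) :=
  tendsto_finsetSum _ fun _ hj => continuousAt_const.div
    (continuousAt_const.sub continuousAt_id) (sub_ne_zero.2 (hp.ne (ne_of_mem_erase hj)))

theorem tendsto_poleSum_nhdsLT {i : ι} (hc : 0 < c i) (hp : Function.Injective p) :
    Tendsto (poleSum c p) (𝓝[<] p i) atTop := by
  classical
  have hgap : Tendsto (fun t => p i - t) (𝓝[<] p i) (𝓝[>] 0) :=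
    tendsto_nhdsWithin_of_tendsto_nhds_of_eventually_within _
      (by simpa using ((continuous_sub_left (p i)).tendsto (p i)).mono_left nhdsWithin_le_nhds)
      (eventually_nhdsWithin_of_forall fun _ ht => mem_Ioi.2 (sub_pos.2 ht))
  have hterm : Tendsto (fun t => c i / (p i - t)) (𝓝[<] p i) atTop := by
    simpa only [div_eq_mul_inv, Pi.inv_apply] using hgap.inv_tendsto_nhdsGT_zero.const_mul_atTop hc
  exact (hterm.atTop_add ((continuousAt_sum_erase_div_sub hp i).tendsto.mono_left
    nhdsWithin_le_nhds)).congr fun t => (poleSum_eq_add_sum_erase i t).symm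

theorem tendsto_poleSum_nhdsGT {i : ι} (hc : 0 < c i) (hp : Function.Injective p) :
    Tendsto (poleSum c p) (𝓝[>] p i) atBot := by
  classical
  have hgap : Tendsto (fun t => p i - t) (𝓝[>] p i) (𝓝[<] 0) :=
    tendsto_nhdsWithin_of_tendsto_nhds_of_eventually_within _
      (by simpa using ((continuous_sub_left (p i)).tendsto (p i)).mono_left nhdsWithin_le_nhds)
      (eventually_nhdsWithin_of_forall fun _ ht => mem_Iio.2 (sub_neg.2 ht))
  have hterm : Tendsto (fun t => c i / (p i - t)) (𝓝[>] p i) atBot := by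
    simpa only [div_eq_mul_inv, Pi.inv_apply] using hgap.inv_tendsto_nhdsLT_zero.const_mul_atBot hc
  exact (hterm.atBot_add ((continuousAt_sum_erase_div_sub hp i).tendsto.mono_left
    nhdsWithin_le_nhds)).congr fun t => (poleSum_eq_add_sum_erase i t).symm

theorem exists_poleSum_eq_of_mem_Ioo (hc : ∀ j, 0 < c j) (hp : Function.Injective p)
    {i k : ι} (hki : p k < p i) (hgap : ∀ j, p j ∉ Ioo (p k) (p i)) (y : ℝ) :
    ∃ t ∈ Ioo (p k) (p i), poleSum c p t = y := by
  have := left_nhdsWithin_Ioo_neBot hki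
  have := right_nhdsWithin_Ioo_neBot hki
  exact isPreconnected_Ioo.intermediate_value_Iii (l₁ := 𝓝[Ioo (p k) (p i)] (p k))
    (l₂ := 𝓝[Ioo (p k) (p i)] (p i)) inf_le_right inf_le_right
    (poleSum_continuousOn hgap)
    ((tendsto_poleSum_nhdsGT (hc k) hp).mono_left (nhdsWithin_mono _ Ioo_subset_Ioi_self))
    ((tendsto_poleSum_nhdsLT (hc i) hp).mono_left (nhdsWithin_mono _ Ioo_subset_Iio_self))
    (mem_univ y)

theorem exists_poleSum_eq_of_le {b y : ℝ} (hb : ∀ j, b < p j) (hy : 0 < y)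
    (hyb : y ≤ poleSum c p b) : ∃ t ≤ b, poleSum c p t = y :=
  isPreconnected_Iic.intermediate_value_Ioc le_rfl (le_principal_iff.2 (Iic_mem_atBot b))
    (poleSum_continuousOn fun j hj => (hb j).not_ge hj) tendsto_poleSum_atBot ⟨hy, hyb⟩

theorem poleSum_nonpos (hc : ∀ j, 0 ≤ c j) {t : ℝ} (ht : ∀ j, p j < t) : poleSum c p t ≤ 0 :=
  sum_nonpos fun j _ => div_nonpos_of_nonneg_of_nonpos (hc j) (sub_nonpos.2 (ht j).le)

end PoleSum

section PoleGap

variable {ι : Type*} [LinearOrder ι] (x : ι → ℝ)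

/-- For strictly decreasing `x` this is `Ioo (x (i + 1)) (x i)`, and `Iio (x i)` for the last
index. -/
def poleGap (i : ι) : Set ℝ :=
  {t | t < x i ∧ ∀ j, i < j → x j < t}

instance (i : ι) : (poleGap x i).OrdConnected :=
  ⟨fun _ ha _ hb _ ht => ⟨ht.2.trans_lt hb.1, fun j hj => (ha.2 j hj).trans_le ht.1⟩⟩

variable {x}

theorem notMem_poleGap (hx : StrictAnti x) (i j : ι) : x j ∉ poleGap x i := fun h => by
  rcases le_or_gt j i with hji | hij
  · exact (hx.antitone hji).not_gt h.1
  · exact lt_irrefl _ (h.2 j hij)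

theorem exists_mem_poleGap [Fintype ι] {t : ℝ} (ht : ∀ i, t ≠ x i) (hlt : ∃ i, t < x i) :
    ∃ i, t ∈ poleGap x i := by
  classical
  obtain ⟨i₀, hi₀⟩ := hlt
  obtain ⟨i, hi, hmax⟩ :=
    (univ.filter fun i => t < x i).exists_max_image id ⟨i₀, by simpa using hi₀⟩
  refine ⟨i, (mem_filter.1 hi).2, fun j hij => ?_⟩
  have hxj : x j ≤ t := not_lt.1 fun htj => (hmax j (by simpa using htj)).not_gt hij
  exact hxj.lt_of_ne (ht j).symm

end PoleGap

theorem exists_poleSum_eq_mem_poleGap {q : ℕ} {c x : Fin q → ℝ} (hc : ∀ j, 0 < c j)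
    (hx : StrictAnti x) (hxpos : ∀ j, 0 < x j) {y : ℝ} (hy : 0 < y) (hy0 : y ≤ poleSum c x 0)
    (i : Fin q) : ∃ t ∈ poleGap x i, poleSum c x t = y := by
  by_cases hi : (i : ℕ) + 1 < q
  · let k : Fin q := ⟨i + 1, hi⟩
    have hik : i < k := Nat.lt_succ_self i
    have hk : ∀ j, i < j → k ≤ j := fun _ hj => hj
    obtain ⟨t, ht, hty⟩ := exists_poleSum_eq_of_mem_Ioo hc hx.injective (hx hik) (fun j hj => by
      rcases le_or_gt j i with hji | hij
      · exact (hx.antitone hji).not_gt hj.2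
      · exact (hx.antitone (hk j hij)).not_gt hj.1) y
    exact ⟨t, ⟨ht.2, fun j hj => (hx.antitone (hk j hj)).trans_lt ht.1⟩, hty⟩
  · obtain ⟨t, ht, hty⟩ := exists_poleSum_eq_of_le hxpos hy hy0
    exact ⟨t, ⟨ht.trans_lt (hxpos i), fun j hj => absurd (Fin.lt_def.1 hj) (by omega)⟩,
      hty⟩

theorem stmt4 (q : ℕ) (hq : 1 ≤ q) (x : Fin q → ℝ) (hxpos : ∀ i, 0 < x i)
    (hxanti : ∀ i j : Fin q, i < j → x j < x i)
    (m : Fin q → ℕ) (hm : ∀ i, 1 ≤ m i) :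
    ∃ η : Fin q → ℝ,
      (∀ i j : Fin q, i < j → η j < η i) ∧
      (∀ i, (∑ j, (m j : ℝ) * x j / (x j - η i)) - 1 = 0) ∧
      (∀ t : ℝ, (∀ i, t ≠ x i) → (∑ j, (m j : ℝ) * x j / (x j - t)) - 1 = 0 →
        ∃ i, t = η i) ∧
      (∀ i, η i < x i) ∧
      (∀ i j : Fin q, (i : ℕ) + 1 = (j : ℕ) → x j < η i) ∧
      η ⟨q - 1, by omega⟩ ≤ 0 ∧
      (1 < ∑ i, m i → η ⟨q - 1, by omega⟩ < 0) := by
  set c : Fin q → ℝ := fun j => (m j : ℝ) * x j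
  have hF : ∀ t, (∑ j, (m j : ℝ) * x j / (x j - t)) - 1 = 0 ↔ poleSum c x t = 1 :=
    fun _ => sub_eq_zero
  have hc : ∀ j, 0 < c j := fun j => mul_pos (by exact_mod_cast hm j) (hxpos j)
  have hx : StrictAnti x := hxanti
  have : Nonempty (Fin q) := ⟨⟨0, hq⟩⟩
  have hF0 : poleSum c x 0 = ∑ j, (m j : ℝ) := sum_congr rfl fun j _ => by
    rw [sub_zero, mul_div_assoc, div_self (hxpos j).ne', mul_one]
  have hsum : (1 : ℝ) ≤ ∑ j, (m j : ℝ) := by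
    exact_mod_cast (hm ⟨0, hq⟩).trans (single_le_sum (fun j _ => Nat.zero_le (m j)) (mem_univ _))
  have hmono : ∀ i, StrictMonoOn (poleSum c x) (poleGap x i) := fun i =>
    poleSum_strictMonoOn hc (notMem_poleGap hx i)
  choose η hηgap hηroot using
    exists_poleSum_eq_mem_poleGap hc hx hxpos one_pos (hF0 ▸ hsum)
  let last : Fin q := ⟨q - 1, by omega⟩
  have h0gap : (0 : ℝ) ∈ poleGap x last :=
    ⟨hxpos last, fun j hj => absurd (Fin.lt_def.1 hj) (by simp [last]; omega)⟩
  refine ⟨η, fun i j hij => (hηgap j).1.trans ((hηgap i).2 j hij), fun i => (hF _).2 (hηroot i),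
    fun t ht htroot => ?_, fun i => (hηgap i).1, fun i j hij => (hηgap i).2 j (by omega), ?_, ?_⟩
  · have hlt : ∃ i, t < x i := by
      by_contra! hle
      have := poleSum_nonpos (fun j => (hc j).le) fun j => (hle j).lt_of_ne (ht j).symm
      linarith [(hF t).1 htroot]
    obtain ⟨i, hti⟩ := exists_mem_poleGap ht hlt
    exact ⟨i, (hmono i).injOn hti (hηgap i) (((hF t).1 htroot).trans (hηroot i).symm)⟩
  · rw [← (hmono last).le_iff_le (hηgap last) h0gap, hηroot, hF0]
    exact hsum
  · intro h
    rw [← (hmono last).lt_iff_lt (hηgap last) h0gap, hηroot, hF0]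
    exact_mod_cast h
end

section
/- Let d ≥ 2 and let λ ∈ ℝ^d be a probability vector with λ₁ ≥ ⋯ ≥ λ_d ≥ 0 satisfying ∑_{i=1}^d λ_i² ≤ 1/(d−1). Then λ₁ ≤ 2/d, and the maximum of λ₁ over all such probability vectors with ∑ λ_i² ≤ 1/(d−1) equals 2/d. -/
open Finset

theorem stmt11 (d : ℕ) (hd : 2 ≤ d) :
    (∀ lam : Fin d → ℝ, (∀ i j : Fin d, i ≤ j → lam j ≤ lam i) → (∀ i, 0 ≤ lam i) →
      (∑ i, lam i = 1) → (∑ i, lam i ^ 2 ≤ 1 / ((d : ℝ) - 1)) →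
      lam ⟨0, by omega⟩ ≤ 2 / d) ∧
    IsGreatest {c : ℝ | ∃ lam : Fin d → ℝ,
      (∀ i j : Fin d, i ≤ j → lam j ≤ lam i) ∧ (∀ i, 0 ≤ lam i) ∧
      (∑ i, lam i = 1) ∧ (∑ i, lam i ^ 2 ≤ 1 / ((d : ℝ) - 1)) ∧
      lam ⟨0, by omega⟩ = c} (2 / d) := by
  have hD : (2 : ℝ) ≤ (d : ℝ) := by exact_mod_cast hd
  have hD1 : (0 : ℝ) < (d : ℝ) - 1 := by linarith
  have hdpos : (0:ℝ) < (d:ℝ) := by linarith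
  have hz0 : (⟨0, by omega⟩ : Fin d) ∈ (univ : Finset (Fin d)) := mem_univ _
  have hcard : ((#(univ.erase (⟨0, by omega⟩ : Fin d))) : ℝ) = (d:ℝ) - 1 := by
    rw [Finset.card_erase_of_mem hz0, Finset.card_univ, Fintype.card_fin]
    have h1 : 1 ≤ d := by omega
    push_cast [Nat.cast_sub h1]
    ring
  have hbound : ∀ lam : Fin d → ℝ, (∀ i j : Fin d, i ≤ j → lam j ≤ lam i) → (∀ i, 0 ≤ lam i) →
      (∑ i, lam i = 1) → (∑ i, lam i ^ 2 ≤ 1 / ((d : ℝ) - 1)) →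
      lam ⟨0, by omega⟩ ≤ 2 / d := by
    intro lam _ hpos hsum hsq
    set z : Fin d := ⟨0, by omega⟩
    set a := lam z with ha
    have hsum' : ∑ i ∈ univ.erase z, lam i = 1 - a := by
      have h := Finset.add_sum_erase univ lam hz0
      rw [hsum] at h
      linarith
    have hsq' : a ^ 2 + ∑ i ∈ univ.erase z, lam i ^ 2 ≤ 1 / ((d : ℝ) - 1) := by
      have h : lam z ^ 2 + ∑ x ∈ univ.erase z, lam x ^ 2 = ∑ x, lam x ^ 2 :=
        Finset.add_sum_erase univ (fun i => lam i ^ 2) hz0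
      rw [ha, h]
      exact hsq
    have hcs : (1 - a) ^ 2 ≤ ((d : ℝ) - 1) * ∑ i ∈ univ.erase z, lam i ^ 2 := by
      have h := sq_sum_le_card_mul_sum_sq (s := univ.erase z) (f := lam)
      rw [hsum', hcard] at h
      exact h
    have hkey : a ^ 2 * ((d : ℝ) - 1) + (1 - a) ^ 2 ≤ 1 := by
      have h2 : ((d : ℝ) - 1) * (a ^ 2 + ∑ i ∈ univ.erase z, lam i ^ 2) ≤ 1 := by
        calc ((d : ℝ) - 1) * (a ^ 2 + ∑ i ∈ univ.erase z, lam i ^ 2)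
            ≤ ((d : ℝ) - 1) * (1 / ((d : ℝ) - 1)) :=
              mul_le_mul_of_nonneg_left hsq' (le_of_lt hD1)
          _ = 1 := by field_simp
      nlinarith [hcs]
    have ha0 : 0 ≤ a := hpos z
    rw [le_div_iff₀ hdpos]
    rcases ha0.eq_or_lt with h | h
    · nlinarith
    · nlinarith
  refine ⟨hbound, ⟨?_, ?_⟩⟩
  · set lam : Fin d → ℝ := fun i => if i = ⟨0, by omega⟩ then 2 / d else
      ((d : ℝ) - 2) / ((d : ℝ) * ((d : ℝ) - 1)) with hlam
    have hb : (0:ℝ) ≤ ((d : ℝ) - 2) / ((d : ℝ) * ((d : ℝ) - 1)) :=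
      div_nonneg (by linarith) (mul_pos hdpos hD1).le
    have hble : ((d : ℝ) - 2) / ((d : ℝ) * ((d : ℝ) - 1)) ≤ 2 / d := by
      rw [div_le_div_iff₀ (mul_pos hdpos hD1) hdpos]
      nlinarith
    have hs1 : ∑ i, lam i = 1 := by
      rw [← Finset.add_sum_erase univ lam hz0,
          Finset.sum_congr rfl (fun x hx => show lam x = ((d:ℝ)-2)/((d:ℝ)*((d:ℝ)-1)) by
            simp [hlam, Finset.ne_of_mem_erase hx]),
          Finset.sum_const, nsmul_eq_mul, hcard]
      simp only [hlam, if_pos rfl]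
      field_simp
      ring
    have hs2 : ∑ i, lam i ^ 2 = 1 / ((d:ℝ) - 1) := by
      rw [← Finset.add_sum_erase univ (fun i => lam i ^ 2) hz0,
          Finset.sum_congr rfl (fun x hx =>
            show lam x ^ 2 = (((d:ℝ)-2)/((d:ℝ)*((d:ℝ)-1))) ^ 2 by
            simp [hlam, Finset.ne_of_mem_erase hx]),
          Finset.sum_const, nsmul_eq_mul, hcard]
      simp only [hlam, if_pos rfl]
      field_simp
      ring
    refine ⟨lam, ?_, ?_, hs1, le_of_eq hs2, by simp [hlam]⟩
    · intro i j hij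
      by_cases hj : j = ⟨0, by omega⟩
      · have hi : i = ⟨0, by omega⟩ := by
          apply Fin.ext
          have h2 : i.1 ≤ j.1 := hij
          rw [hj] at h2
          simpa using Nat.le_zero.mp h2
        simp [hlam, hi, hj]
      · by_cases hi : i = ⟨0, by omega⟩
        · simp [hlam, hi, hj, hble]
        · simp [hlam, hi, hj]
    · intro i
      by_cases hi : i = ⟨0, by omega⟩
      · simp only [hlam, hi, if_pos rfl]; positivity
      · simpa [hlam, hi] using hb
  · rintro c ⟨lam, hmono, hpos, hsum, hsq, rfl⟩
    exact hbound lam hmono hpos hsum hsq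
end

section
/- For real numbers λ₁ ≥ ⋯ ≥ λ_{2n} ≥ 0 (n ≥ 2), the following are equivalent: (i) for all a ∈ [1/2, 1], −√(a(1−a))·λ₁ + (1−a)·λ_{2n−2} + √(a(1−a))·λ_{2n−1} + a·λ_{2n} ≥ 0; (ii) λ₁ ≤ λ_{2n−1} + 2√(λ_{2n−2}·λ_{2n}). -/
/-!
Dividing by `√(a(1-a))`, condition (i) reads
`λ₁ - λ_{2n-1} ≤ √((1-a)/a) λ_{2n-2} + √(a/(1-a)) λ_{2n}`.
By AM–GM the right side is at least `2√(λ_{2n-2} λ_{2n})`, with equality at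
`a = λ_{2n-2} / (λ_{2n-2} + λ_{2n})`, which lies in `[1/2, 1]` because the `λ`s are sorted.
When `λ_{2n} = 0` the infimum `0` is only approached as `a → 1`.
-/

open Real Set

theorem sqrt_mul_one_sub_mul_two_sqrt_le {a b d : ℝ} (ha₀ : 0 ≤ a) (ha₁ : a ≤ 1)
    (hb : 0 ≤ b) (hd : 0 ≤ d) :
    √(a * (1 - a)) * (2 * √(b * d)) ≤ (1 - a) * b + a * d := by
  have hsplit : √(a * (1 - a)) * √(b * d) = √((1 - a) * b) * √(a * d) := by
    rw [← sqrt_mul (by nlinarith), ← sqrt_mul (by nlinarith)]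
    ring_nf
  calc √(a * (1 - a)) * (2 * √(b * d)) = 2 * √((1 - a) * b) * √(a * d) := by
        rw [mul_left_comm, hsplit, mul_assoc]
    _ ≤ √((1 - a) * b) ^ 2 + √(a * d) ^ 2 := two_mul_le_add_sq _ _
    _ = (1 - a) * b + a * d := by
        rw [sq_sqrt (by nlinarith), sq_sqrt (by nlinarith)]

theorem mul_sq_le_sq_of_sqrt_mul_le {s x y : ℝ} (hs : 0 ≤ s) (hx : 0 ≤ x) (h : √s * x ≤ y) :
    s * x ^ 2 ≤ y ^ 2 := by
  have := pow_le_pow_left₀ (by positivity) h 2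
  rwa [mul_pow, sq_sqrt hs] at this

theorem nonpos_of_forall_sqrt_mul_one_sub_le {b x : ℝ}
    (h : ∀ a ∈ Icc (1 / 2 : ℝ) 1, √(a * (1 - a)) * x ≤ (1 - a) * b) : x ≤ 0 := by
  by_contra! hx
  -- `a = 1 - t` with `t (x² + b²) = x² / 2` makes `(1 - t) x²` exceed `t b²`.
  set t := x ^ 2 / (2 * (x ^ 2 + b ^ 2)) with ht
  have hS : 0 < x ^ 2 + b ^ 2 := by positivity
  have htS : t * (x ^ 2 + b ^ 2) = x ^ 2 / 2 := by rw [ht]; field_simp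
  have ht₀ : 0 < t := by positivity
  have ht₁ : t ≤ 1 / 2 := by nlinarith
  have hsq := mul_sq_le_sq_of_sqrt_mul_le (by nlinarith) hx.le
    (h (1 - t) ⟨by linarith, by linarith⟩)
  rw [sub_sub_cancel] at hsq
  have hdiv : (1 - t) * x ^ 2 ≤ t * b ^ 2 := le_of_mul_le_mul_left (by linarith) ht₀
  linarith [pow_pos hx 2]

theorem le_two_sqrt_mul_of_sqrt_mul_le {b d x : ℝ} (hb : 0 < b) (hd : 0 < d)
    (h : √(b / (b + d) * (1 - b / (b + d))) * x
      ≤ (1 - b / (b + d)) * b + b / (b + d) * d) :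
    x ≤ 2 * √(b * d) := by
  have hbd : 0 < b + d := by linarith
  have hone : 1 - b / (b + d) = d / (b + d) := by field_simp; ring
  have hroot : √(b / (b + d) * (1 - b / (b + d))) = √(b * d) / (b + d) := by
    rw [hone, div_mul_div_comm, sqrt_div' _ (by positivity), ← sq, sqrt_sq hbd.le]
  rw [hroot, hone, div_mul_eq_mul_div, div_mul_eq_mul_div, div_mul_eq_mul_div, ← add_div,
    div_le_div_iff_of_pos_right hbd] at h
  have hs : 0 < √(b * d) := sqrt_pos.2 (by positivity)
  refine le_of_mul_le_mul_left ?_ hs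
  calc √(b * d) * x ≤ d * b + b * d := h
    _ = √(b * d) * (2 * √(b * d)) := by rw [mul_left_comm, mul_self_sqrt (by positivity)]; ring

theorem forall_sqrt_mul_le_iff {b d x : ℝ} (hd : 0 ≤ d) (hdb : d ≤ b) :
    (∀ a ∈ Icc (1 / 2 : ℝ) 1, √(a * (1 - a)) * x ≤ (1 - a) * b + a * d)
      ↔ x ≤ 2 * √(b * d) := by
  refine ⟨fun h => ?_, fun h a ⟨ha₁, ha₂⟩ => ?_⟩
  · rcases hd.eq_or_lt with rfl | hd
    · simpa using nonpos_of_forall_sqrt_mul_one_sub_le fun a ha => by simpa using h a ha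
    · have hbd : 0 < b + d := by linarith
      refine le_two_sqrt_mul_of_sqrt_mul_le (hd.trans_le hdb) hd (h _ ⟨?_, ?_⟩)
      · rw [le_div_iff₀ hbd]; linarith
      · rw [div_le_one hbd]; linarith
  · calc √(a * (1 - a)) * x ≤ √(a * (1 - a)) * (2 * √(b * d)) :=
          mul_le_mul_of_nonneg_left h (sqrt_nonneg _)
      _ ≤ (1 - a) * b + a * d :=
          sqrt_mul_one_sub_mul_two_sqrt_le (by linarith) ha₂ (hd.trans hdb) hd

theorem stmt12 (n : ℕ) (hn : 2 ≤ n) (lam : Fin (2 * n) → ℝ)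
    (hsort : ∀ i j : Fin (2 * n), i ≤ j → lam j ≤ lam i)
    (hnonneg : ∀ i, 0 ≤ lam i) :
    (∀ a : ℝ, a ∈ Set.Icc (1/2 : ℝ) 1 →
      0 ≤ -Real.sqrt (a * (1 - a)) * lam ⟨0, by omega⟩
        + (1 - a) * lam ⟨2 * n - 3, by omega⟩
        + Real.sqrt (a * (1 - a)) * lam ⟨2 * n - 2, by omega⟩
        + a * lam ⟨2 * n - 1, by omega⟩)
    ↔ lam ⟨0, by omega⟩ ≤ lam ⟨2 * n - 2, by omega⟩
        + 2 * Real.sqrt (lam ⟨2 * n - 3, by omega⟩ * lam ⟨2 * n - 1, by omega⟩) := by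
  have hdb := hsort ⟨2 * n - 3, by omega⟩ ⟨2 * n - 1, by omega⟩ (Fin.mk_le_mk.2 (by omega))
  rw [← sub_le_iff_le_add', ← forall_sqrt_mul_le_iff (hnonneg _) hdb]
  refine forall₂_congr fun a _ => ?_
  rw [mul_sub]
  constructor <;> intro h <;> linarith
end

section
/- Let λ₁ ≥ ⋯ ≥ λ_{3n} ≥ 0 (n ≥ 3) satisfy λ₁ ≤ λ_{3n−1} + λ_{3n}. Then the 3×3 Hermitian matrix with rows (2λ_{3n}, λ_{3n−1}−λ₁, λ_{3n−2}−λ₂), (λ_{3n−1}−λ₁, 2λ_{3n−3}, λ_{3n−4}−λ₃), (λ_{3n−2}−λ₂, λ_{3n−4}−λ₃, 2λ_{3n−5}) is positive semidefinite. -/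
/-!
By Gershgorin's circle theorem a Hermitian matrix whose diagonal entries dominate the sums of
the absolute values of the off-diagonal entries of their rows is positive semidefinite. Here
every off-diagonal entry is a gap `λ_j - λ_i` with `i ≤ j ≤ 3n - 1`, so by monotonicity its
absolute value is at most `λ₁ - λ_{3n-1} ≤ λ_{3n}`, while every diagonal entry is at least
`2 λ_{3n}` (indices as in the paper; `lam` is indexed from `0`).
-/

open Finset
open scoped ComplexOrder

theorem Matrix.IsHermitian.posSemidef_of_sum_norm_offDiag_le {𝕜 n : Type*} [RCLike 𝕜]
    [Fintype n] [DecidableEq n] {A : Matrix n n 𝕜} (hA : A.IsHermitian)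
    (hdom : ∀ i, ∑ j ∈ univ.erase i, ‖A i j‖ ≤ RCLike.re (A i i)) : A.PosSemidef := by
  rw [hA.posSemidef_iff_eigenvalues_nonneg]
  intro i
  have hμ : Module.End.HasEigenvalue (Matrix.toLin' A) (hA.eigenvalues i : 𝕜) := by
    rw [Module.End.hasEigenvalue_iff_mem_spectrum, Matrix.spectrum_toLin']
    exact spectrum.algebraMap_mem 𝕜 (hA.eigenvalues_mem_spectrum_real i)
  obtain ⟨k, hk⟩ := eigenvalue_mem_ball hμ
  rw [Metric.mem_closedBall, dist_comm, dist_eq_norm] at hk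
  have hre := (RCLike.re_le_norm (A k k - hA.eigenvalues i)).trans (hk.trans (hdom k))
  simp only [map_sub, RCLike.ofReal_re] at hre
  simpa using hre

theorem Matrix.posSemidef_fin_three_of_abs_le {a b c d e f : ℝ}
    (ha : |d| + |e| ≤ a) (hb : |d| + |f| ≤ b) (hc : |e| + |f| ≤ c) :
    (Matrix.of ![![a, d, e], ![d, b, f], ![e, f, c]] : Matrix (Fin 3) (Fin 3) ℝ).PosSemidef := by
  refine Matrix.IsHermitian.posSemidef_of_sum_norm_offDiag_le ?_ fun i => ?_
  · ext i j
    fin_cases i <;> fin_cases j <;> rfl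
  · fin_cases i <;>
      simp only [Fin.zero_eta, Fin.mk_one, Fin.reduceFinMk, Fin.isValue, of_apply, cons_val',
        cons_val_fin_one, cons_val_zero, cons_val_one, cons_val, Real.norm_eq_abs, mem_univ,
        sum_erase_eq_sub, Fin.sum_univ_three, RCLike.re_to_real] <;>
      linarith

theorem stmt14 (n : ℕ) (hn : 3 ≤ n) (lam : Fin (3 * n) → ℝ)
    (hsort : ∀ i j : Fin (3 * n), i ≤ j → lam j ≤ lam i)
    (h : lam ⟨0, by omega⟩ ≤ lam ⟨3 * n - 2, by omega⟩ + lam ⟨3 * n - 1, by omega⟩) :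
    (Matrix.of ![
      ![2 * lam ⟨3*n-1, by omega⟩, lam ⟨3*n-2, by omega⟩ - lam ⟨0, by omega⟩,
        lam ⟨3*n-3, by omega⟩ - lam ⟨1, by omega⟩],
      ![lam ⟨3*n-2, by omega⟩ - lam ⟨0, by omega⟩, 2 * lam ⟨3*n-4, by omega⟩,
        lam ⟨3*n-5, by omega⟩ - lam ⟨2, by omega⟩],
      ![lam ⟨3*n-3, by omega⟩ - lam ⟨1, by omega⟩, lam ⟨3*n-5, by omega⟩ - lam ⟨2, by omega⟩,
        2 * lam ⟨3*n-6, by omega⟩]] : Matrix (Fin 3) (Fin 3) ℝ).PosSemidef := by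
  have hle (i j : ℕ) (hi : i < 3 * n) (hj : j < 3 * n) (hij : i ≤ j) :
      lam ⟨j, hj⟩ ≤ lam ⟨i, hi⟩ :=
    hsort _ _ (Fin.mk_le_mk.mpr hij)
  have hgap (i j : ℕ) (hi : i < 3 * n) (hj : j < 3 * n) (hij : i ≤ j) (hj' : j ≤ 3 * n - 2) :
      |lam ⟨j, hj⟩ - lam ⟨i, hi⟩| ≤ lam ⟨3 * n - 1, by omega⟩ := by
    rw [abs_sub_comm, abs_of_nonneg (sub_nonneg.mpr (hle i j hi hj hij))]
    linarith [hle 0 i (by omega) hi (by omega), hle j (3 * n - 2) hj (by omega) hj']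
  have hmin (k : ℕ) (hk : k < 3 * n) : lam ⟨3 * n - 1, by omega⟩ ≤ lam ⟨k, hk⟩ :=
    hle k _ hk (by omega) (by omega)
  apply Matrix.posSemidef_fin_three_of_abs_le <;>
    linarith [hgap 0 (3 * n - 2) (by omega) (by omega) (by omega) le_rfl,
      hgap 1 (3 * n - 3) (by omega) (by omega) (by omega) (by omega),
      hgap 2 (3 * n - 5) (by omega) (by omega) (by omega) (by omega),
      hmin (3 * n - 4) (by omega), hmin (3 * n - 6) (by omega)]
end

section
/- Let Z ⊆ ℝ^d and define AZ° to be the set of probability vectors λ ∈ Δ_d such that ⟨λ↓, z↑⟩ ≥ 0 for all z ∈ Z, where λ↓ and z↑ denote decreasing and increasing rearrangements. If λ ∈ AZ° and μ ∈ Δ_d is majorized by λ, then μ ∈ AZ°. -/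
/-!
Writing `z↑` for the increasing rearrangement, the pairing `⟨v, z↑⟩` is antitone in `v` for the
majorization order: by Abel summation, `⟨λ↓ - μ↓, z↑⟩` is a combination of the nonnegative partial
sums of `λ↓ - μ↓` with the nonnegative increments of `z↑`, and its last term vanishes because
`λ` and `μ` have the same total mass. Hence `0 ≤ ⟨λ↓, z↑⟩ ≤ ⟨μ↓, z↑⟩`.
-/

open Finset

/-- The increasing rearrangement of a vector. -/
noncomputable def asc {d : ℕ} (v : Fin d → ℝ) : Fin d → ℝ :=
  fun i => v (Tuple.sort v i)

/-- The decreasing rearrangement of a vector. -/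
noncomputable def desc {d : ℕ} (v : Fin d → ℝ) : Fin d → ℝ :=
  fun i => asc v i.rev

lemma monotone_asc {d : ℕ} (v : Fin d → ℝ) : Monotone (asc v) :=
  Tuple.monotone_sort v

lemma sum_desc {d : ℕ} (v : Fin d → ℝ) : ∑ i, desc v i = ∑ i, v i :=
  (Equiv.sum_comp Fin.revPerm (asc v)).trans (Equiv.sum_comp (Tuple.sort v) v)

lemma sum_filter_lt_castSucc {d : ℕ} (c : Fin (d + 1) → ℝ) (m : ℕ) :
    ∑ i ∈ univ.filter (fun i : Fin d => (i : ℕ) < m), c i.castSucc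
      = ∑ i ∈ univ.filter (fun i : Fin (d + 1) => (i : ℕ) < min m d), c i := by
  simp only [sum_filter, Fin.sum_univ_castSucc, Fin.val_castSucc, Fin.val_last, lt_min_iff,
    lt_irrefl, and_false, if_false, add_zero, Fin.is_lt, and_true]

lemma sum_mul_le_sum_mul_of_prefix_sum_nonneg {d : ℕ} {c B : Fin d → ℝ} (hB : Monotone B)
    (hc : ∀ m : ℕ, 0 ≤ ∑ i ∈ univ.filter (fun i : Fin d => (i : ℕ) < m), c i)
    {M : ℝ} (hM : ∀ i, B i ≤ M) :
    ∑ i, c i * B i ≤ (∑ i, c i) * M := by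
  have htot : 0 ≤ ∑ i, c i := by simpa [filter_true_of_mem] using hc d
  induction d generalizing M with
  | zero => simp
  | succ d ih =>
    have hc_init (m : ℕ) :
        0 ≤ ∑ i ∈ univ.filter (fun i : Fin d => (i : ℕ) < m), c i.castSucc := by
      rw [sum_filter_lt_castSucc]
      exact hc _
    -- the induction hypothesis is applied with the bound `M := B (Fin.last d)`
    calc ∑ i, c i * B i
        = ∑ i : Fin d, c i.castSucc * B i.castSucc + c (Fin.last d) * B (Fin.last d) :=
          Fin.sum_univ_castSucc _
      _ ≤ (∑ i : Fin d, c i.castSucc) * B (Fin.last d) + c (Fin.last d) * B (Fin.last d) := by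
          gcongr
          exact ih (hB.comp Fin.strictMono_castSucc.monotone) hc_init
            (fun i => hB (Fin.le_last _)) (by simpa [filter_true_of_mem] using hc_init d)
      _ = (∑ i, c i) * B (Fin.last d) := by rw [Fin.sum_univ_castSucc, add_mul]
      _ ≤ (∑ i, c i) * M := mul_le_mul_of_nonneg_left (hM _) htot

lemma sum_mul_le_sum_mul_of_prefix_sum_le {d : ℕ} {a b B : Fin d → ℝ} (hB : Monotone B)
    (hsum : ∑ i, a i = ∑ i, b i)
    (hprefix : ∀ m : ℕ, ∑ i ∈ univ.filter (fun i : Fin d => (i : ℕ) < m), a i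
        ≤ ∑ i ∈ univ.filter (fun i : Fin d => (i : ℕ) < m), b i) :
    ∑ i, b i * B i ≤ ∑ i, a i * B i := by
  have hdiff := sum_mul_le_sum_mul_of_prefix_sum_nonneg (c := b - a) hB
    (fun m => by simpa only [Pi.sub_apply, sum_sub_distrib, sub_nonneg] using hprefix m)
    (M := ∑ i, |B i|) (fun i => (le_abs_self _).trans (single_le_sum (fun j _ => abs_nonneg (B j))
      (mem_univ i)))
  simpa only [Pi.sub_apply, sub_mul, sum_sub_distrib, hsum, sub_self, zero_mul, sub_nonpos]
    using hdiff

theorem stmt16_general (d : ℕ) (Z : Set (Fin d → ℝ))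
    (lam mu : Fin d → ℝ)
    (hlamsum : ∑ i, lam i = 1)
    (hmusum : ∑ i, mu i = 1)
    (hmem : ∀ z ∈ Z, 0 ≤ ∑ i, desc lam i * asc z i)
    (hmaj : ∀ m : ℕ, ∑ i ∈ univ.filter (fun i : Fin d => (i : ℕ) < m), desc mu i
        ≤ ∑ i ∈ univ.filter (fun i : Fin d => (i : ℕ) < m), desc lam i) :
    ∀ z ∈ Z, 0 ≤ ∑ i, desc mu i * asc z i := by
  have hsum : ∑ i, desc mu i = ∑ i, desc lam i := by
    rw [sum_desc, sum_desc, hmusum, hlamsum]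
  intro z hz
  exact (hmem z hz).trans (sum_mul_le_sum_mul_of_prefix_sum_le (monotone_asc z) hsum hmaj)

theorem stmt16 (d : ℕ) (Z : Set (Fin d → ℝ))
    (lam mu : Fin d → ℝ)
    (hlamnn : ∀ i, 0 ≤ lam i) (hlamsum : ∑ i, lam i = 1)
    (hmunn : ∀ i, 0 ≤ mu i) (hmusum : ∑ i, mu i = 1)
    (hmem : ∀ z ∈ Z, 0 ≤ ∑ i, desc lam i * asc z i)
    (hmaj : ∀ m : ℕ, ∑ i ∈ univ.filter (fun i : Fin d => (i : ℕ) < m), desc mu i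
        ≤ ∑ i ∈ univ.filter (fun i : Fin d => (i : ℕ) < m), desc lam i) :
    ∀ z ∈ Z, 0 ≤ ∑ i, desc mu i * asc z i :=
  stmt16_general d Z lam mu hlamsum hmusum hmem hmaj
end

section
/- Let n, k ≥ 2, r = min(n,k), and let λ ∈ ℝ^{nk} with λ₁ ≥ ⋯ ≥ λ_{nk} ≥ 0, ∑ λ_i = 1, satisfy λ₁ ≤ λ_{nk−k+1} + λ_{nk−k+2} + ⋯ + λ_{nk} (i.e., λ ∈ LS_k). Then for every x ∈ Δ_r with x₁ ≥ ⋯ ≥ x_r ≥ 0 and all real numbers η₁,…,η_r satisfying η_i ≤ x_i for i ∈ [r−1] and η_r = −(η₁ + ⋯ + η_{r−1}), we have x₁(λ_{nk}+⋯+λ_{nk−k+2}) + η₁λ_{nk−k+1} + x₂(λ_{(n−1)k}+⋯+λ_{(n−1)k−k+2}) + η₂λ_{(n−1)k−k+1} + ⋯ + x_r(λ_{(n−r+1)k}+⋯+λ_{(n−r+1)k−k+2}) + η_r λ₁ ≥ (λ_{nk} + ⋯ + λ_{nk−k+1}) − λ₁ ≥ 0. -/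
open Finset

theorem stmt19 (n k : ℕ) (hn : 2 ≤ n) (hk : 2 ≤ k) (r : ℕ) (hr : r = min n k)
    (lam : ℕ → ℝ)
    (hsort : ∀ i j : ℕ, i ≤ j → j < n * k → lam j ≤ lam i)
    (hnonneg : ∀ i, i < n * k → 0 ≤ lam i)
    (hsum : ∑ i ∈ Finset.range (n * k), lam i = 1)
    (hLS : lam 0 ≤ ∑ j ∈ Finset.Ico (n * k - k) (n * k), lam j)
    (x : ℕ → ℝ)
    (hxsort : ∀ i j : ℕ, i ≤ j → j < r → x j ≤ x i)
    (hxnonneg : ∀ i, i < r → 0 ≤ x i)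
    (hxsum : ∑ i ∈ Finset.range r, x i = 1)
    (η : ℕ → ℝ)
    (hη : ∀ i, i + 1 < r → η i ≤ x i)
    (hηr : η (r - 1) = -∑ i ∈ Finset.range (r - 1), η i) :
    (∑ j ∈ Finset.Ico (n * k - k) (n * k), lam j) - lam 0 ≤
      (∑ s ∈ Finset.range r,
        x s * ∑ j ∈ Finset.Ico ((n - s) * k - k + 1) ((n - s) * k), lam j)
      + (∑ s ∈ Finset.range (r - 1), η s * lam ((n - s - 1) * k))
      + η (r - 1) * lam 0 ∧
    0 ≤ (∑ j ∈ Finset.Ico (n * k - k) (n * k), lam j) - lam 0 := by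
  have hrn : r ≤ n := by omega
  have hr2 : 2 ≤ r := by omega
  have hkn : k ≤ n * k := Nat.le_mul_of_pos_left k (by omega)
  have hank : n * k - k < n * k := by omega
  have hek : (n - 1) * k = n * k - k := by
    rw [Nat.sub_mul, one_mul]
  -- split tail block
  have hsplit : ∑ j ∈ Finset.Ico (n * k - k) (n * k), lam j
      = lam (n * k - k) + ∑ j ∈ Finset.Ico (n * k - k + 1) (n * k), lam j :=
    Finset.sum_eq_sum_Ico_succ_bot hank lam
  -- each S_s dominates S_0
  have hS : ∀ s < r, ∑ j ∈ Finset.Ico (n * k - k + 1) (n * k), lam j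
      ≤ ∑ j ∈ Finset.Ico ((n - s) * k - k + 1) ((n - s) * k), lam j := by
    intro s hs
    have hsn : s < n := lt_of_lt_of_le hs hrn
    have h1 : k ≤ (n - s) * k := Nat.le_mul_of_pos_left k (by omega)
    have h2 : (n - s) * k ≤ n * k := Nat.mul_le_mul_right k (by omega)
    rw [Finset.sum_Ico_eq_sum_range, Finset.sum_Ico_eq_sum_range]
    have e1 : n * k - (n * k - k + 1) = k - 1 := by omega
    have e2 : (n - s) * k - ((n - s) * k - k + 1) = k - 1 := by omega
    rw [e1, e2]
    apply Finset.sum_le_sum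
    intro i hi
    simp only [Finset.mem_range] at hi
    exact hsort _ _ (by omega) (by omega)
  -- x-part bound
  have hxS : ∑ j ∈ Finset.Ico (n * k - k + 1) (n * k), lam j
      ≤ ∑ s ∈ Finset.range r,
        x s * ∑ j ∈ Finset.Ico ((n - s) * k - k + 1) ((n - s) * k), lam j := by
    calc ∑ j ∈ Finset.Ico (n * k - k + 1) (n * k), lam j
        = ∑ s ∈ Finset.range r, x s * ∑ j ∈ Finset.Ico (n * k - k + 1) (n * k), lam j := by
          rw [← Finset.sum_mul, hxsum, one_mul]
      _ ≤ _ := by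
          apply Finset.sum_le_sum
          intro s hs
          exact mul_le_mul_of_nonneg_left (hS s (Finset.mem_range.mp hs))
            (hxnonneg s (Finset.mem_range.mp hs))
  -- η-part bound
  have hxr1 : ∑ s ∈ Finset.range (r - 1), x s ≤ 1 := by
    have h0 := Finset.sum_range_succ x (r - 1)
    have hr1 : r - 1 + 1 = r := by omega
    rw [hr1] at h0
    have h1 := hxnonneg (r - 1) (by omega)
    rw [hxsum] at h0
    linarith
  have hla0 : lam (n * k - k) ≤ lam 0 := hsort 0 _ (Nat.zero_le _) hank
  have hterm : ∀ s ∈ Finset.range (r - 1),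
      x s * (lam (n * k - k) - lam 0) ≤ η s * (lam ((n - s - 1) * k) - lam 0) := by
    intro s hs
    simp only [Finset.mem_range] at hs
    have hsk1 : (n - s - 1) * k ≤ (n - 1) * k := Nat.mul_le_mul_right k (by omega)
    have hsk2 : (n - s - 1) * k < n * k := by omega
    have hh0 : lam ((n - s - 1) * k) ≤ lam 0 := hsort 0 _ (Nat.zero_le _) hsk2
    have hha : lam (n * k - k) ≤ lam ((n - s - 1) * k) := hsort _ _ (by omega) hank
    calc x s * (lam (n * k - k) - lam 0)
        ≤ x s * (lam ((n - s - 1) * k) - lam 0) :=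
          mul_le_mul_of_nonneg_left (by linarith) (hxnonneg s (by omega))
      _ ≤ η s * (lam ((n - s - 1) * k) - lam 0) :=
          mul_le_mul_of_nonpos_right (hη s (by omega)) (by linarith)
  have hetab : lam (n * k - k) - lam 0 ≤
      ∑ s ∈ Finset.range (r - 1), η s * lam ((n - s - 1) * k) + η (r - 1) * lam 0 := by
    have hrw : ∑ s ∈ Finset.range (r - 1), η s * lam ((n - s - 1) * k) + η (r - 1) * lam 0
        = ∑ s ∈ Finset.range (r - 1), η s * (lam ((n - s - 1) * k) - lam 0) := by
      rw [hηr, neg_mul, Finset.sum_mul, ← sub_eq_add_neg, ← Finset.sum_sub_distrib]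
      congr 1; ext s; ring
    rw [hrw]
    calc lam (n * k - k) - lam 0
        = 1 * (lam (n * k - k) - lam 0) := (one_mul _).symm
      _ ≤ (∑ s ∈ Finset.range (r - 1), x s) * (lam (n * k - k) - lam 0) :=
          mul_le_mul_of_nonpos_right hxr1 (by linarith)
      _ = ∑ s ∈ Finset.range (r - 1), x s * (lam (n * k - k) - lam 0) := by
          rw [Finset.sum_mul]
      _ ≤ _ := Finset.sum_le_sum hterm
  constructor
  · rw [hsplit]
    linarith
  · linarith
end
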